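/- arXiv:2209.15607 — 5 statements merged into one kernel-verified Lean document; each statement's English description precedes it below -/
import Mathlib

section
/- Let μ be a centered, compactly supported Borel probability measure on ℝ that is not a Dirac mass, and let μ̂ be a Nevanlinna measure for μ. If E ∈ ℝ satisfies dist(E, supp μ) > 0 and ∫_ℝ (x − E)⁻¹ dμ(x) = 0, then μ̂({E}) > 0, i.e. E is an atom of μ̂. -/
open MeasureTheory Complex Set Filter Topology

noncomputable section

/-- Cauchy–Stieltjes transform `m_μ(z) = ∫ (x − z)⁻¹ dμ(x)`. -/
def mTr (μ : Measure ℝ) (z : ℂ) : ℂ := ∫ x, ((x : ℂ) - z)⁻¹ ∂μ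

/-- Negative reciprocal Cauchy–Stieltjes transform `F_μ(z) = −1/m_μ(z)`. -/
def FTr (μ : Measure ℝ) (z : ℂ) : ℂ := -(mTr μ z)⁻¹

/-- `I_ν(ω) = ∫ |x − ω|⁻² dν(x)`. -/
def Inu (ν : Measure ℝ) (ω : ℂ) : ℝ := ∫ x, (Complex.normSq ((x : ℂ) - ω))⁻¹ ∂ν

/-- Topological support of a Borel measure on ℝ. -/
def msupport (μ : Measure ℝ) : Set ℝ := {x | ∀ U : Set ℝ, IsOpen U → x ∈ U → 0 < μ U}

/-- `μh` is a Nevanlinna measure for the (centered) measure `μ`: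
a finite Borel measure with `F_μ(ω) − ω = ∫ (x − ω)⁻¹ dμh(x)` on ℂ⁺. -/
def IsNevanlinna (μ μh : Measure ℝ) : Prop :=
  IsFiniteMeasure μh ∧ ∀ ω : ℂ, 0 < ω.im → FTr μ ω - ω = ∫ x, ((x : ℂ) - ω)⁻¹ ∂μh

/-- Subordination function for `μ` at time `t`. -/
structure IsSubordination (μ : Measure ℝ) (t : ℝ) (ω : ℂ → ℂ) : Prop where
  contOn : ContinuousOn ω {z : ℂ | 0 ≤ z.im}
  mapsTo : ∀ z : ℂ, 0 ≤ z.im → 0 ≤ (ω z).im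
  diff : DifferentiableOn ℂ ω {z : ℂ | 0 < z.im}
  im_ge : ∀ z : ℂ, 0 < z.im → z.im ≤ (ω z).im
  subord : ∀ z : ℂ, 0 < z.im → (t : ℂ) * ω z - z = ((t - 1 : ℝ) : ℂ) * FTr μ (ω z)

/-- `ν = μ^{⊞t}`, the free convolution power associated with the subordination function `ω`. -/
def IsFreePower (μ : Measure ℝ) (t : ℝ) (ω : ℂ → ℂ) (ν : Measure ℝ) : Prop :=
  IsProbabilityMeasure ν ∧ ∀ z : ℂ, 0 < z.im → mTr ν z = mTr μ (ω z)

/-- Subordination functions for the pair `(μa, μb)`. -/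
structure IsPairSubordination (μa μb : Measure ℝ) (ωa ωb : ℂ → ℂ) : Prop where
  diff_a : DifferentiableOn ℂ ωa {z : ℂ | 0 < z.im}
  diff_b : DifferentiableOn ℂ ωb {z : ℂ | 0 < z.im}
  im_a : ∀ z : ℂ, 0 < z.im → z.im ≤ (ωa z).im
  im_b : ∀ z : ℂ, 0 < z.im → z.im ≤ (ωb z).im
  lim_a : Tendsto (fun η : ℝ => ωa (η * Complex.I) / (η * Complex.I)) atTop (nhds 1)
  lim_b : Tendsto (fun η : ℝ => ωb (η * Complex.I) / (η * Complex.I)) atTop (nhds 1)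
  eq_a : ∀ z : ℂ, 0 < z.im → ωa z + ωb z - z = FTr μa (ωb z)
  eq_b : ∀ z : ℂ, 0 < z.im → ωa z + ωb z - z = FTr μb (ωa z)

/-- `ν = μa ⊞ μb`, the free additive convolution. -/
def IsFreeConv (μa μb : Measure ℝ) (ωb : ℂ → ℂ) (ν : Measure ℝ) : Prop :=
  IsProbabilityMeasure ν ∧ ∀ z : ℂ, 0 < z.im → mTr ν z = mTr μa (ωb z)

/-- Assumption 1 of the paper: `μ` is a centered, compactly supported probability
measure whose singular part consists of finitely many atoms and whose absolutely
continuous part has a density `ρ` of Jacobi type, supported on finitely many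
disjoint compact intervals with power-law behavior (exponents in `(−1,1)`). -/
structure JacobiData (μ : Measure ℝ) where
  ρ : ℝ → ℝ
  n : ℕ
  npos : 0 < n
  Em : Fin n → ℝ
  Ep : Fin n → ℝ
  βm : Fin n → ℝ
  βp : Fin n → ℝ
  Cj : Fin n → ℝ
  atoms : Finset ℝ
  w : ℝ → ℝ
  prob : IsProbabilityMeasure μ
  compactSupp : ∃ K : Set ℝ, IsCompact K ∧ μ Kᶜ = 0
  centered : ∫ x, x ∂μ = 0
  lt : ∀ j, Em j < Ep j
  disj : ∀ i j, i ≠ j → Disjoint (Set.Icc (Em i) (Ep i)) (Set.Icc (Em j) (Ep j))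
  βm_mem : ∀ j, βm j ∈ Set.Ioo (-1 : ℝ) 1
  βp_mem : ∀ j, βp j ∈ Set.Ioo (-1 : ℝ) 1
  Cj_ge : ∀ j, 1 ≤ Cj j
  ρ_nonneg : ∀ x, 0 ≤ ρ x
  ρ_supp : ∀ x, x ∉ ⋃ j, Set.Icc (Em j) (Ep j) → ρ x = 0
  powerLaw : ∀ j, ∀ᵐ E ∂(volume.restrict (Set.Icc (Em j) (Ep j))),
      (Cj j)⁻¹ * ((E - Em j) ^ (βm j) * (Ep j - E) ^ (βp j)) ≤ ρ E ∧
      ρ E ≤ Cj j * ((E - Em j) ^ (βm j) * (Ep j - E) ^ (βp j))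
  w_nonneg : ∀ a, 0 ≤ w a
  decomp : μ = volume.withDensity (fun x => ENNReal.ofReal (ρ x))
      + ∑ a ∈ atoms, ENNReal.ofReal (w a) • Measure.dirac a

/-- The support of the absolutely continuous part of `μ`. -/
def JacobiData.acSupport {μ : Measure ℝ} (d : JacobiData μ) : Set ℝ :=
  ⋃ j, Set.Icc (d.Em j) (d.Ep j)

/-- The Hölder condition (5.1)/(2.8) of the paper on the density of `μ_ac`. -/
def JacobiData.HolderCond {μ : Measure ℝ} (d : JacobiData μ) : Prop :=
  ∀ j, ∃ L γ : NNReal, 0 < γ ∧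
    HolderOnWith L γ
      (fun E => d.ρ E / ((E - d.Em j) ^ (d.βm j) * (d.Ep j - E) ^ (d.βp j)))
      (Set.Icc (d.Em j) (d.Ep j))

/-- Assumption 2 of the paper: a centered, absolutely continuous probability measure
supported on finitely many disjoint compact intervals, with density of Jacobi type. -/
structure AbsJacobiData (μ : Measure ℝ) where
  ρ : ℝ → ℝ
  n : ℕ
  npos : 0 < n
  Am : Fin n → ℝ
  Ap : Fin n → ℝ
  sm : Fin n → ℝ
  sp : Fin n → ℝ
  Cj : Fin n → ℝ
  prob : IsProbabilityMeasure μ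
  centered : ∫ x, x ∂μ = 0
  lt : ∀ j, Am j < Ap j
  disj : ∀ i j, i ≠ j → Disjoint (Set.Icc (Am i) (Ap i)) (Set.Icc (Am j) (Ap j))
  sm_mem : ∀ j, sm j ∈ Set.Ioo (-1 : ℝ) 1
  sp_mem : ∀ j, sp j ∈ Set.Ioo (-1 : ℝ) 1
  Cj_ge : ∀ j, 1 ≤ Cj j
  ρ_nonneg : ∀ x, 0 ≤ ρ x
  ρ_supp : ∀ x, x ∉ ⋃ j, Set.Icc (Am j) (Ap j) → ρ x = 0
  powerLaw : ∀ j, ∀ᵐ E ∂(volume.restrict (Set.Icc (Am j) (Ap j))),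
      (Cj j)⁻¹ * ((E - Am j) ^ (sm j) * (Ap j - E) ^ (sp j)) ≤ ρ E ∧
      ρ E ≤ Cj j * ((E - Am j) ^ (sm j) * (Ap j - E) ^ (sp j))
  decomp : μ = volume.withDensity (fun x => ENNReal.ofReal (ρ x))


/-!
Write `ω = E + iη` with `η ↓ 0`. Since `m_μ(E) = 0` and `E` is at positive distance from
`supp μ`, the resolvent identity gives `m_μ(ω) = iη ∫ (x − ω)⁻¹ (x − E)⁻¹ dμ`, so by dominated
convergence `η F_μ(ω) → i / ∫ (x − E)⁻² dμ`. On the other hand `η m_ν(ω) → i ν{E}` for every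
finite measure `ν`. Multiplying the Nevanlinna relation by `η` and letting `η ↓ 0` therefore
gives `μ̂{E} = (∫ (x − E)⁻² dμ)⁻¹ > 0`.
-/

lemma msupport_eq_support (μ : Measure ℝ) : msupport μ = μ.support := by
  rw [Measure.support_eq_forall_isOpen]
  ext x
  exact ⟨fun h U hxU hU => h U hU hxU, fun h U hU hxU => h U hxU hU⟩

lemma ae_infDist_msupport_le_abs_sub (μ : Measure ℝ) (E : ℝ) :
    ∀ᵐ x ∂μ, Metric.infDist E (msupport μ) ≤ |x - E| := by
  filter_upwards [msupport_eq_support μ ▸ Measure.support_mem_ae] with x hx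
  rw [abs_sub_comm, ← Real.dist_eq]
  exact Metric.infDist_le_dist_of_mem hx

lemma mTr_ofReal (μ : Measure ℝ) (E : ℝ) : mTr μ E = ((∫ x, (x - E)⁻¹ ∂μ : ℝ) : ℂ) := by
  rw [mTr, ← integral_complex_ofReal]
  push_cast
  rfl

lemma abs_sub_le_norm_ofReal_sub (x E η : ℝ) : |x - E| ≤ ‖(x : ℂ) - (E + η * I)‖ := by
  simpa using abs_re_le_norm ((x : ℂ) - (E + η * I))

lemma abs_le_norm_ofReal_sub (x E η : ℝ) : |η| ≤ ‖(x : ℂ) - (E + η * I)‖ := by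
  simpa using abs_im_le_norm ((x : ℂ) - (E + η * I))

section AwayFromSupport

variable {μ : Measure ℝ} [IsFiniteMeasure μ] {δ : ℝ}

lemma integrable_inv_ofReal_sub {z : ℂ} (hδ : 0 < δ) (hz : ∀ᵐ x : ℝ ∂μ, δ ≤ ‖(x : ℂ) - z‖) :
    Integrable (fun x : ℝ => ((x : ℂ) - z)⁻¹) μ := by
  refine (integrable_const δ⁻¹).mono' (by fun_prop) ?_
  filter_upwards [hz] with x hx
  rw [norm_inv]
  exact inv_anti₀ hδ hx

lemma mTr_sub_mTr {z w : ℂ} (hδ : 0 < δ) (hz : ∀ᵐ x : ℝ ∂μ, δ ≤ ‖(x : ℂ) - z‖)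
    (hw : ∀ᵐ x : ℝ ∂μ, δ ≤ ‖(x : ℂ) - w‖) :
    mTr μ z - mTr μ w = (z - w) * ∫ x, ((x : ℂ) - z)⁻¹ * ((x : ℂ) - w)⁻¹ ∂μ := by
  rw [mTr, mTr, ← integral_sub (integrable_inv_ofReal_sub hδ hz) (integrable_inv_ofReal_sub hδ hw),
    ← integral_const_mul]
  refine integral_congr_ae ?_
  filter_upwards [hz, hw] with x hxz hxw
  have hz0 : (x : ℂ) - z ≠ 0 := norm_pos_iff.mp (hδ.trans_le hxz)
  have hw0 : (x : ℂ) - w ≠ 0 := norm_pos_iff.mp (hδ.trans_le hxw)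
  field_simp
  ring

lemma tendsto_integral_inv_mul_inv {E : ℝ} (hδ : 0 < δ) (hE : ∀ᵐ x ∂μ, δ ≤ |x - E|) :
    Tendsto (fun η : ℝ => ∫ x, ((x : ℂ) - (E + η * I))⁻¹ * ((x : ℂ) - E)⁻¹ ∂μ) (𝓝 0)
      (𝓝 ((∫ x, ((x - E) ^ 2)⁻¹ ∂μ : ℝ) : ℂ)) := by
  rw [← integral_complex_ofReal]
  refine tendsto_integral_filter_of_dominated_convergence (fun _ => δ⁻¹ * δ⁻¹)
    (Eventually.of_forall fun η => by fun_prop) (Eventually.of_forall fun η => ?_)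
    (integrable_const _) ?_
  · filter_upwards [hE] with x hx
    rw [norm_mul, norm_inv, norm_inv]
    gcongr
    · exact hx.trans (abs_sub_le_norm_ofReal_sub x E η)
    · simpa using hx.trans (abs_sub_le_norm_ofReal_sub x E 0)
  · filter_upwards [hE] with x hx
    have hx0 : (x : ℂ) - E ≠ 0 := by
      rw [← ofReal_sub, ofReal_ne_zero, ← abs_pos]
      exact hδ.trans_le hx
    have hcont : ContinuousAt (fun η : ℝ => ((x : ℂ) - (E + η * I))⁻¹ * ((x : ℂ) - E)⁻¹) 0 :=
      ((continuous_const.sub (continuous_const.add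
        (continuous_ofReal.mul continuous_const))).continuousAt.inv₀ (by simpa using hx0)).mul
        continuousAt_const
    convert hcont.tendsto using 2
    push_cast
    simp [sq]

lemma integral_inv_sq_sub_pos [NeZero μ] {E : ℝ} (hδ : 0 < δ) (hE : ∀ᵐ x ∂μ, δ ≤ |x - E|) :
    0 < ∫ x, ((x - E) ^ 2)⁻¹ ∂μ := by
  have hint : Integrable (fun x => ((x - E) ^ 2)⁻¹) μ := by
    refine (integrable_const (δ ^ 2)⁻¹).mono' (by fun_prop) ?_
    filter_upwards [hE] with x hx
    rw [norm_inv, norm_pow, Real.norm_eq_abs]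
    gcongr
  rw [integral_pos_iff_support_of_nonneg (fun x => by positivity) hint]
  have hae : Function.support (fun x => ((x - E) ^ 2)⁻¹) ∈ ae μ := by
    filter_upwards [hE] with x hx
    exact inv_ne_zero (pow_ne_zero 2 (abs_pos.mp (hδ.trans_le hx)))
  rw [measure_congr (ae_eq_univ.mpr (mem_ae_iff.mp hae))]
  exact Measure.measure_univ_pos.mpr (NeZero.ne μ)

lemma tendsto_mul_FTr_of_mTr_eq_zero [NeZero μ] {E : ℝ} (hδ : 0 < δ)
    (hE : ∀ᵐ x ∂μ, δ ≤ |x - E|) (hzero : mTr μ E = 0) :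
    Tendsto (fun η : ℝ => (η : ℂ) * FTr μ (E + η * I)) (𝓝[≠] 0)
      (𝓝 (I / ∫ x, ((x - E) ^ 2)⁻¹ ∂μ)) := by
  set J := fun η : ℝ => ∫ x, ((x : ℂ) - (E + η * I))⁻¹ * ((x : ℂ) - E)⁻¹ ∂μ
  have hI₀ : ((∫ x, ((x - E) ^ 2)⁻¹ ∂μ : ℝ) : ℂ) ≠ 0 :=
    ofReal_ne_zero.mpr (integral_inv_sq_sub_pos hδ hE).ne'
  refine ((tendsto_const_nhds.div (tendsto_integral_inv_mul_inv hδ hE) hI₀).mono_left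
    nhdsWithin_le_nhds).congr' ?_
  filter_upwards [self_mem_nhdsWithin] with η (hη : η ≠ 0)
  have hm : mTr μ (E + η * I) = η * I * J η := by
    have hnorm (η : ℝ) : ∀ᵐ x : ℝ ∂μ, δ ≤ ‖(x : ℂ) - (E + η * I)‖ := by
      filter_upwards [hE] with x hx using hx.trans (abs_sub_le_norm_ofReal_sub x E η)
    have h := mTr_sub_mTr hδ (hnorm η) (by simpa using hnorm 0)
    rwa [hzero, sub_zero, add_sub_cancel_left] at h
  have hη' : (η : ℂ) ≠ 0 := ofReal_ne_zero.mpr hη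
  show I / J η = _
  rw [FTr, hm, mul_inv, mul_inv, inv_I]
  field_simp

end AwayFromSupport

lemma tendsto_mul_mTr_nhdsNE (ν : Measure ℝ) [IsFiniteMeasure ν] (E : ℝ) :
    Tendsto (fun η : ℝ => (η : ℂ) * mTr ν (E + η * I)) (𝓝[≠] 0) (𝓝 (I * ν.real {E})) := by
  simp_rw [mTr, ← integral_const_mul]
  rw [mul_comm, ← Complex.real_smul, ← integral_indicator_const I (measurableSet_singleton E)]
  refine tendsto_integral_filter_of_dominated_convergence (fun _ => 1)
    (Eventually.of_forall fun η => by fun_prop) ?_ (integrable_const _) ?_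
  · filter_upwards [self_mem_nhdsWithin] with η (hη : η ≠ 0)
    refine Eventually.of_forall fun x => ?_
    rw [norm_mul, norm_inv, norm_real, Real.norm_eq_abs, ← div_eq_mul_inv]
    exact div_le_one_of_le₀ (abs_le_norm_ofReal_sub x E η) (norm_nonneg _)
  · refine Eventually.of_forall fun x => ?_
    rcases eq_or_ne x E with rfl | hx
    · rw [indicator_of_mem (mem_singleton x)]
      refine tendsto_const_nhds.congr' ?_
      filter_upwards [self_mem_nhdsWithin] with η (hη : η ≠ 0)
      have hη' : (η : ℂ) ≠ 0 := ofReal_ne_zero.mpr hη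
      field_simp
      linear_combination (-(η : ℂ)) * I_sq
    · rw [indicator_of_notMem (mem_singleton_iff.not.mpr hx)]
      have hx0 : (x : ℂ) - E ≠ 0 := sub_ne_zero.mpr (ofReal_injective.ne hx)
      have hcont : ContinuousAt (fun η : ℝ => (η : ℂ) * ((x : ℂ) - (E + η * I))⁻¹) 0 :=
        continuous_ofReal.continuousAt.mul
          ((continuous_const.sub (continuous_const.add
            (continuous_ofReal.mul continuous_const))).continuousAt.inv₀ (by simpa using hx0))
      simpa using hcont.tendsto.mono_left nhdsWithin_le_nhds

theorem statement1_general (μ : Measure ℝ) (hprob : IsProbabilityMeasure μ)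
    (μh : Measure ℝ) (hNev : IsNevanlinna μ μh)
    (E : ℝ) (hdist : 0 < Metric.infDist E (msupport μ))
    (hzero : ∫ x, (x - E)⁻¹ ∂μ = 0) :
    0 < μh {E} := by
  obtain ⟨hfin, hNev⟩ := hNev
  set I₀ := ∫ x, ((x - E) ^ 2)⁻¹ ∂μ
  have hF : Tendsto (fun η : ℝ => (η : ℂ) * (FTr μ (E + η * I) - (E + η * I))) (𝓝[>] 0)
      (𝓝 (I / I₀)) := by
    have hω : Tendsto (fun η : ℝ => (η : ℂ) * (E + η * I)) (𝓝[>] 0) (𝓝 0) :=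
      ((continuous_ofReal.mul (continuous_const.add (continuous_ofReal.mul
        continuous_const))).tendsto' 0 0 (by simp)).mono_left nhdsWithin_le_nhds
    simpa [mul_sub] using ((tendsto_mul_FTr_of_mTr_eq_zero hdist
      (ae_infDist_msupport_le_abs_sub μ E) (by rw [mTr_ofReal, hzero, ofReal_zero])).mono_left
      (nhdsGT_le_nhdsNE 0)).sub hω
  have hmh : Tendsto (fun η : ℝ => (η : ℂ) * (FTr μ (E + η * I) - (E + η * I))) (𝓝[>] 0)
      (𝓝 (I * μh.real {E})) := by
    refine ((tendsto_mul_mTr_nhdsNE μh E).mono_left (nhdsGT_le_nhdsNE 0)).congr' ?_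
    filter_upwards [self_mem_nhdsWithin] with η (hη : 0 < η)
    rw [hNev _ (by simpa using hη), mTr]
  have hatom : μh.real {E} = I₀⁻¹ := by
    have h := mul_left_cancel₀ I_ne_zero ((tendsto_nhds_unique hmh hF).trans (div_eq_mul_inv _ _))
    exact_mod_cast h
  have hpos : 0 < μh.real {E} := hatom ▸
    inv_pos.mpr (integral_inv_sq_sub_pos hdist (ae_infDist_msupport_le_abs_sub μ E))
  exact (ENNReal.toReal_pos_iff.mp hpos).1

/-- a zero of `m_μ` at positive distance from `supp μ` is an atom of `μ̂`. -/
theorem statement1 (μ : Measure ℝ) (hprob : IsProbabilityMeasure μ)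
    (hcpt : ∃ K : Set ℝ, IsCompact K ∧ μ Kᶜ = 0)
    (hcent : ∫ x, x ∂μ = 0)
    (hnd : ∀ a : ℝ, μ ≠ Measure.dirac a)
    (μh : Measure ℝ) (hNev : IsNevanlinna μ μh)
    (E : ℝ) (hdist : 0 < Metric.infDist E (msupport μ))
    (hzero : ∫ x, (x - E)⁻¹ ∂μ = 0) :
    0 < μh {E} :=
  statement1_general μ hprob μh hNev E hdist hzero

end
end

section
/- Let μ be a centered, compactly supported Borel probability measure on ℝ that is not a Dirac mass, μ̂ a Nevanlinna measure for μ, t > 1, and ω_t a subordination function for μ at time t. Then for every z ∈ ℂ⁺ one has Im ω_t(z) ≥ Im z > 0 and (t − 1)·I_{μ̂}(ω_t(z)) = 1 − Im z / Im ω_t(z); in particular I_{μ̂}(ω_t(z)) ≤ 1/(t − 1) for all z ∈ ℂ⁺. -/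
open MeasureTheory Complex Set Filter Topology

noncomputable section

/-- for every `z ∈ ℂ⁺`, `Im ω_t(z) ≥ Im z > 0`,
`(t−1)·I_{μ̂}(ω_t(z)) = 1 − Im z / Im ω_t(z)`, and `I_{μ̂}(ω_t(z)) ≤ 1/(t−1)`. -/
theorem statement2 (μ : Measure ℝ) (hprob : IsProbabilityMeasure μ)
    (hcpt : ∃ K : Set ℝ, IsCompact K ∧ μ Kᶜ = 0)
    (hcent : ∫ x, x ∂μ = 0)
    (hnd : ∀ a : ℝ, μ ≠ Measure.dirac a)
    (μh : Measure ℝ) (hNev : IsNevanlinna μ μh)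
    (t : ℝ) (ht : 1 < t)
    (ωt : ℂ → ℂ) (hsub : IsSubordination μ t ωt) :
    ∀ z : ℂ, 0 < z.im →
      (0 < (ωt z).im ∧ z.im ≤ (ωt z).im) ∧
      (t - 1) * Inu μh (ωt z) = 1 - z.im / (ωt z).im ∧
      Inu μh (ωt z) ≤ 1 / (t - 1) := by
  intro z hz
  set ω := ωt z with hωdef
  have hω : 0 < ω.im := lt_of_lt_of_le hz (hsub.im_ge z hz)
  have htne : ((t - 1 : ℝ) : ℂ) ≠ 0 := by
    simp only [ne_eq, Complex.ofReal_eq_zero]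
    linarith
  -- F(ω) - ω = (ω - z)/(t-1)
  have hF : FTr μ ω - ω = (ω - z) / ((t - 1 : ℝ) : ℂ) := by
    rw [eq_div_iff htne]
    have h := hsub.subord z hz
    push_cast at h ⊢
    linear_combination -h
  have hNev2 := (hNev.2 ω hω).symm.trans hF
  -- integrability
  haveI : IsFiniteMeasure μh := hNev.1
  have hne : ∀ x : ℝ, ((x : ℂ) - ω) ≠ 0 := by
    intro x h
    have : ((x : ℂ) - ω).im = 0 := by rw [h]; simp
    simp only [Complex.sub_im, Complex.ofReal_im, zero_sub, neg_eq_zero] at this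
    exact hω.ne' this
  have hmeas : AEStronglyMeasurable (fun x : ℝ => ((x : ℂ) - ω)⁻¹) μh :=
    ((Complex.measurable_ofReal.sub measurable_const).inv).aestronglyMeasurable
  have hint : Integrable (fun x : ℝ => ((x : ℂ) - ω)⁻¹) μh := by
    refine (integrable_const (ω.im)⁻¹).mono' hmeas ?_
    filter_upwards with x
    rw [norm_inv]
    have h1 : ω.im ≤ ‖(x : ℂ) - ω‖ := by
      have := Complex.abs_im_le_norm ((x : ℂ) - ω)
      simp only [Complex.sub_im, Complex.ofReal_im, zero_sub, abs_neg] at this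
      calc ω.im ≤ |ω.im| := le_abs_self _
        _ ≤ ‖(x : ℂ) - ω‖ := this
    exact inv_anti₀ hω h1
  -- imaginary part of the integral
  have him : (∫ x, ((x : ℂ) - ω)⁻¹ ∂μh).im = ω.im * Inu μh ω := by
    have h1 : ∫ x, (((x : ℂ) - ω)⁻¹).im ∂μh = (∫ x, ((x : ℂ) - ω)⁻¹ ∂μh).im :=
      integral_im hint
    rw [← h1, Inu, ← integral_const_mul]
    refine integral_congr_ae (Filter.Eventually.of_forall fun x => ?_)
    simp only [Complex.inv_im, Complex.sub_im, Complex.ofReal_im, zero_sub, neg_neg,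
      div_eq_mul_inv]
  -- key equation
  have hkey : ω.im * Inu μh ω = (ω.im - z.im) / (t - 1) := by
    rw [← him, hNev2, Complex.div_ofReal_im, Complex.sub_im]
  have hmain : (t - 1) * Inu μh ω = 1 - z.im / ω.im := by
    have ht1 : (0:ℝ) < t - 1 := by linarith
    field_simp at hkey ⊢
    nlinarith [hkey]
  refine ⟨⟨hω, hsub.im_ge z hz⟩, hmain, ?_⟩
  have ht1 : (0:ℝ) < t - 1 := by linarith
  have hle : (t - 1) * Inu μh ω ≤ 1 := by
    rw [hmain]
    have : 0 ≤ z.im / ω.im := div_nonneg hz.le hω.le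
    linarith
  rw [le_div_iff₀ ht1]
  linarith [hle]

end
end

section
/- Let μ_α and μ_β be centered, compactly supported Borel probability measures on ℝ, neither a Dirac mass, with Nevanlinna measures μ̂_α and μ̂_β respectively, and let ω_α, ω_β be subordination functions for the pair (μ_α, μ_β). Then for every z ∈ ℂ⁺: I_{μ̂_α}(ω_β(z)) · I_{μ̂_β}(ω_α(z)) ≤ 1. -/
open MeasureTheory Complex Set Filter Topology

noncomputable section

lemma sub_ne_aux (x : ℝ) {ω : ℂ} (hω : 0 < ω.im) : (x:ℂ) - ω ≠ 0 := by
  intro h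
  have : ((x:ℂ) - ω).im = 0 := by rw [h]; simp
  simp at this
  linarith

lemma aux_integrable (ν : Measure ℝ) [IsFiniteMeasure ν] {ω : ℂ} (hω : 0 < ω.im) :
    Integrable (fun x : ℝ => ((x:ℂ) - ω)⁻¹) ν := by
  have hcont : Continuous (fun x : ℝ => ((x:ℂ) - ω)⁻¹) :=
    Continuous.inv₀ (by continuity) (fun x => sub_ne_aux x hω)
  refine ⟨hcont.aestronglyMeasurable, HasFiniteIntegral.of_bounded (C := ω.im⁻¹) ?_⟩
  filter_upwards with x
  rw [norm_inv]
  refine inv_anti₀ hω ?_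
  calc ω.im = |((x:ℂ) - ω).im| := by simp [abs_of_nonpos, hω.le]
  _ ≤ ‖(x:ℂ) - ω‖ := Complex.abs_im_le_norm _

lemma im_int_aux (ν : Measure ℝ) [IsFiniteMeasure ν] {ω : ℂ} (hω : 0 < ω.im) :
    (∫ x, ((x:ℂ) - ω)⁻¹ ∂ν).im = ω.im * Inu ν ω := by
  rw [show (∫ x, ((x:ℂ) - ω)⁻¹ ∂ν).im = ∫ x, ω.im / Complex.normSq ((x:ℂ) - ω) ∂ν from by
    simpa using (integral_im (aux_integrable ν hω)).symm]
  rw [Inu, ← integral_const_mul]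
  simp [div_eq_mul_inv]

lemma inu_nonneg_aux (ν : Measure ℝ) (ω : ℂ) : 0 ≤ Inu ν ω := by
  apply integral_nonneg; intro x; exact inv_nonneg.mpr (Complex.normSq_nonneg _)

/-- for the pair subordination functions,
`I_{μ̂_α}(ω_β(z)) · I_{μ̂_β}(ω_α(z)) ≤ 1` on ℂ⁺. -/
theorem statement3 (μa μb : Measure ℝ)
    (hproba : IsProbabilityMeasure μa) (hprobb : IsProbabilityMeasure μb)
    (hcpta : ∃ K : Set ℝ, IsCompact K ∧ μa Kᶜ = 0)
    (hcptb : ∃ K : Set ℝ, IsCompact K ∧ μb Kᶜ = 0)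
    (hcenta : ∫ x, x ∂μa = 0) (hcentb : ∫ x, x ∂μb = 0)
    (hnda : ∀ a : ℝ, μa ≠ Measure.dirac a) (hndb : ∀ a : ℝ, μb ≠ Measure.dirac a)
    (μha μhb : Measure ℝ) (hNeva : IsNevanlinna μa μha) (hNevb : IsNevanlinna μb μhb)
    (ωa ωb : ℂ → ℂ) (hsub : IsPairSubordination μa μb ωa ωb) :
    ∀ z : ℂ, 0 < z.im → Inu μha (ωb z) * Inu μhb (ωa z) ≤ 1 := by
  intro z hz
  haveI := hNeva.1
  haveI := hNevb.1
  have ha : 0 < (ωa z).im := lt_of_lt_of_le hz (hsub.im_a z hz)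
  have hb : 0 < (ωb z).im := lt_of_lt_of_le hz (hsub.im_b z hz)
  have h1 : (ωa z).im - z.im = (ωb z).im * Inu μha (ωb z) := by
    have e : ωa z - z = ∫ x, ((x:ℂ) - ωb z)⁻¹ ∂μha := by
      rw [← hNeva.2 (ωb z) hb]
      linear_combination hsub.eq_a z hz
    have := congrArg Complex.im e
    rw [im_int_aux μha hb] at this
    simpa using this
  have h2 : (ωb z).im - z.im = (ωa z).im * Inu μhb (ωa z) := by
    have e : ωb z - z = ∫ x, ((x:ℂ) - ωa z)⁻¹ ∂μhb := by
      rw [← hNevb.2 (ωa z) ha]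
      linear_combination hsub.eq_b z hz
    have := congrArg Complex.im e
    rw [im_int_aux μhb ha] at this
    simpa using this
  nlinarith [inu_nonneg_aux μha (ωb z), inu_nonneg_aux μhb (ωa z), mul_pos ha hb,
    hsub.im_a z hz, hsub.im_b z hz, hz, mul_pos hz hb, mul_pos hz ha]

end
end

section
/- Let μ be a centered, compactly supported Borel probability measure on ℝ that is not a Dirac mass, and let μ̂ be a Nevanlinna measure for μ. Let E ∈ ℝ be an atom of μ, i.e. μ({E}) > 0, and let (ω_n) be a sequence in ℂ⁺ converging to E non-tangentially, i.e. ω_n → E and sup_n |Re ω_n − E| / Im ω_n < ∞. Then I_{μ̂}(ω_n) → 1/μ({E}) − 1 as n → ∞. -/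
open MeasureTheory Complex Set Filter Topology

noncomputable section

/-!
At an atom `E`, the kernel `k_ω(x) = (E - ω)/(x - ω)` equals `1` at `x = E`, tends to `0` elsewhere as
`ω → E`, and stays bounded as long as `ω` approaches `E` non-tangentially. Dominated convergence then
gives `(E - ω) m_μ(ω) = ∫ k_ω dμ → μ{E}` and `|E - ω|² I_μ(ω) = ∫ |k_ω|² dμ → μ{E}`. Taking imaginary
parts in the Nevanlinna representation gives `I_μ̂(ω) = I_μ(ω)/|m_μ(ω)|² - 1`, and the common factor
`|E - ω|²` turns the right-hand side into `μ{E}/μ{E}² - 1`.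
-/

lemma ofReal_sub_ne_zero {ω : ℂ} (hω : ω.im ≠ 0) (x : ℝ) : (x : ℂ) - ω ≠ 0 := by
  intro h
  exact hω (by simpa using congrArg Complex.im h)

lemma im_le_norm_ofReal_sub {ω : ℂ} (hω : 0 ≤ ω.im) (x : ℝ) : ω.im ≤ ‖(x : ℂ) - ω‖ := by
  simpa [abs_of_nonneg hω] using Complex.abs_im_le_norm ((x : ℂ) - ω)

lemma continuous_div_ofReal_sub {ω : ℂ} (hω : ω.im ≠ 0) (c : ℂ) :
    Continuous fun x : ℝ => c / ((x : ℂ) - ω) :=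
  continuous_const.div (Complex.continuous_ofReal.sub continuous_const) (ofReal_sub_ne_zero hω)

lemma integrable_inv_ofReal_sub_s6 (ν : Measure ℝ) [IsFiniteMeasure ν] {ω : ℂ} (hω : 0 < ω.im) :
    Integrable (fun x : ℝ => ((x : ℂ) - ω)⁻¹) ν := by
  refine .of_bound (by simpa using (continuous_div_ofReal_sub hω.ne' 1).aestronglyMeasurable)
    ω.im⁻¹ (.of_forall fun x => ?_)
  rw [norm_inv]
  exact inv_anti₀ hω (im_le_norm_ofReal_sub hω.le x)

lemma im_integral_inv_ofReal_sub (ν : Measure ℝ) [IsFiniteMeasure ν] {ω : ℂ} (hω : 0 < ω.im) :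
    (∫ x, ((x : ℂ) - ω)⁻¹ ∂ν).im = ω.im * Inu ν ω := by
  rw [← RCLike.im_eq_complex_im, ← integral_im (integrable_inv_ofReal_sub_s6 ν hω), Inu,
    ← integral_const_mul]
  congr with x
  simp [div_eq_mul_inv]

lemma Inu_eq_of_isNevanlinna {μ μh : Measure ℝ} [IsFiniteMeasure μ] (hNev : IsNevanlinna μ μh)
    {ω : ℂ} (hω : 0 < ω.im) :
    Inu μh ω = Inu μ ω / Complex.normSq (mTr μ ω) - 1 := by
  have := hNev.1
  have hμh : (FTr μ ω - ω).im = ω.im * Inu μh ω := by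
    rw [hNev.2 ω hω]
    exact im_integral_inv_ofReal_sub μh hω
  have hF : (FTr μ ω).im = ω.im * (Inu μ ω / Complex.normSq (mTr μ ω)) := by
    rw [FTr, Complex.neg_im, Complex.inv_im, mTr, im_integral_inv_ofReal_sub μ hω]
    ring
  rw [Complex.sub_im, hF] at hμh
  refine mul_left_cancel₀ hω.ne' ?_
  linarith

lemma tendsto_integral_of_tendsto_indicator {α G : Type*} [MeasurableSpace α]
    [NormedAddCommGroup G] [NormedSpace ℝ G] [CompleteSpace G] {μ : Measure α} [IsFiniteMeasure μ]
    {F : ℕ → α → G} {s : Set α} (hs : MeasurableSet s) {c : G} {B : ℝ}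
    (hmeas : ∀ n, AEStronglyMeasurable (F n) μ) (hbound : ∀ n x, ‖F n x‖ ≤ B)
    (hlim : ∀ x, Tendsto (fun n => F n x) atTop (𝓝 (s.indicator (fun _ => c) x))) :
    Tendsto (fun n => ∫ x, F n x ∂μ) atTop (𝓝 (μ.real s • c)) := by
  rw [← integral_indicator_const c hs]
  exact tendsto_integral_of_dominated_convergence (fun _ => B) hmeas (integrable_const B)
    (fun n => .of_forall (hbound n)) (.of_forall hlim)

section NonTangential

variable {E C : ℝ}

lemma norm_div_ofReal_sub_le {ω : ℂ} (hω : 0 < ω.im) (hre : |ω.re - E| ≤ C * ω.im) (x : ℝ) :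
    ‖((E : ℂ) - ω) / ((x : ℂ) - ω)‖ ≤ C + 1 := by
  have hC : 0 ≤ C := nonneg_of_mul_nonneg_left ((abs_nonneg _).trans hre) hω
  have hx := im_le_norm_ofReal_sub hω.le x
  rw [norm_div, div_le_iff₀ (hω.trans_le hx)]
  calc ‖(E : ℂ) - ω‖ ≤ |ω.re - E| + ω.im := by
        simpa [abs_sub_comm, abs_of_pos hω] using Complex.norm_le_abs_re_add_abs_im ((E : ℂ) - ω)
    _ ≤ (C + 1) * ω.im := by linarith
    _ ≤ (C + 1) * ‖(x : ℂ) - ω‖ := by gcongr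

variable {ω : ℕ → ℂ}

lemma tendsto_div_ofReal_sub (him : ∀ n, 0 < (ω n).im) (hlim : Tendsto ω atTop (𝓝 (E : ℂ)))
    (x : ℝ) :
    Tendsto (fun n => ((E : ℂ) - ω n) / ((x : ℂ) - ω n)) atTop
      (𝓝 (({E} : Set ℝ).indicator (fun _ => 1) x)) := by
  by_cases hx : x = E
  · subst hx
    simp [div_self (ofReal_sub_ne_zero (him _).ne' x)]
  · have hxE : (x : ℂ) - E ≠ 0 := sub_ne_zero.2 (by exact_mod_cast hx)
    have h := ((tendsto_const_nhds (x := (E : ℂ))).sub hlim).div (tendsto_const_nhds.sub hlim) hxE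
    rw [sub_self, zero_div] at h
    rwa [Set.indicator_of_notMem (by simpa using hx)]

lemma tendsto_integral_div_ofReal_sub (μ : Measure ℝ) [IsFiniteMeasure μ]
    (him : ∀ n, 0 < (ω n).im) (hlim : Tendsto ω atTop (𝓝 (E : ℂ)))
    (hre : ∀ n, |(ω n).re - E| ≤ C * (ω n).im) :
    Tendsto (fun n => ∫ x, ((E : ℂ) - ω n) / ((x : ℂ) - ω n) ∂μ) atTop (𝓝 (μ.real {E} : ℂ)) := by
  simpa using tendsto_integral_of_tendsto_indicator (measurableSet_singleton E)
    (fun n => (continuous_div_ofReal_sub (him n).ne' _).aestronglyMeasurable)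
    (fun n => norm_div_ofReal_sub_le (him n) (hre n)) (tendsto_div_ofReal_sub him hlim)

lemma tendsto_integral_normSq_div_ofReal_sub (μ : Measure ℝ) [IsFiniteMeasure μ]
    (him : ∀ n, 0 < (ω n).im) (hlim : Tendsto ω atTop (𝓝 (E : ℂ)))
    (hre : ∀ n, |(ω n).re - E| ≤ C * (ω n).im) :
    Tendsto (fun n => ∫ x, Complex.normSq (((E : ℂ) - ω n) / ((x : ℂ) - ω n)) ∂μ) atTop
      (𝓝 (μ.real {E})) := by
  have hbound (n : ℕ) (x : ℝ) :
      ‖Complex.normSq (((E : ℂ) - ω n) / ((x : ℂ) - ω n))‖ ≤ (C + 1) ^ 2 := by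
    rw [Real.norm_of_nonneg (Complex.normSq_nonneg _), Complex.normSq_eq_norm_sq]
    gcongr
    exact norm_div_ofReal_sub_le (him n) (hre n) x
  have hpointwise (x : ℝ) : Tendsto (fun n => Complex.normSq (((E : ℂ) - ω n) / ((x : ℂ) - ω n)))
      atTop (𝓝 (({E} : Set ℝ).indicator (fun _ => 1) x)) := by
    have h := (Complex.continuous_normSq.tendsto _).comp (tendsto_div_ofReal_sub him hlim x)
    by_cases hx : x = E <;> simpa [hx, Function.comp_def] using h
  simpa using tendsto_integral_of_tendsto_indicator (measurableSet_singleton E)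
    (fun n => (Complex.continuous_normSq.comp
      (continuous_div_ofReal_sub (him n).ne' _)).aestronglyMeasurable) hbound hpointwise

end NonTangential

lemma Inu_div_normSq_mTr_eq (μ : Measure ℝ) {E : ℝ} {ω : ℂ} (hω : ω.im ≠ 0) :
    Inu μ ω / Complex.normSq (mTr μ ω) =
      (∫ x, Complex.normSq (((E : ℂ) - ω) / ((x : ℂ) - ω)) ∂μ) /
        Complex.normSq (∫ x, ((E : ℂ) - ω) / ((x : ℂ) - ω) ∂μ) := by
  have hE : Complex.normSq ((E : ℂ) - ω) ≠ 0 :=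
    Complex.normSq_eq_zero.not.2 (ofReal_sub_ne_zero hω E)
  simp only [div_eq_mul_inv, Complex.normSq_mul, Complex.normSq_inv, integral_const_mul,
    Inu, mTr]
  field_simp

theorem statement6_general (μ : Measure ℝ) (hprob : IsProbabilityMeasure μ)
    (μh : Measure ℝ) (hNev : IsNevanlinna μ μh)
    (E : ℝ) (hatom : 0 < μ {E})
    (ωn : ℕ → ℂ) (him : ∀ n, 0 < (ωn n).im)
    (hlim : Tendsto ωn atTop (nhds (E : ℂ)))
    (hnontang : ∃ C : ℝ, ∀ n, |(ωn n).re - E| / (ωn n).im ≤ C) :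
    Tendsto (fun n => Inu μh (ωn n)) atTop (nhds (1 / (μ {E}).toReal - 1)) := by
  obtain ⟨C, hC⟩ := hnontang
  have hre : ∀ n, |(ωn n).re - E| ≤ C * (ωn n).im := fun n => (div_le_iff₀ (him n)).1 (hC n)
  have hμE : μ.real {E} ≠ 0 := (ENNReal.toReal_pos hatom.ne' (measure_ne_top μ _)).ne'
  have hnum := tendsto_integral_normSq_div_ofReal_sub μ him hlim hre
  have hden : Tendsto (fun n => Complex.normSq (∫ x, ((E : ℂ) - ωn n) / ((x : ℂ) - ωn n) ∂μ))
      atTop (𝓝 (μ.real {E} * μ.real {E})) := by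
    simpa [Function.comp_def] using (Complex.continuous_normSq.tendsto _).comp
      (tendsto_integral_div_ofReal_sub μ him hlim hre)
  simp_rw [Inu_eq_of_isNevanlinna hNev (him _), Inu_div_normSq_mTr_eq μ (E := E) (him _).ne']
  have hlimit : 1 / (μ {E}).toReal - 1 = μ.real {E} / (μ.real {E} * μ.real {E}) - 1 := by
    rw [← measureReal_def]
    field_simp
  rw [hlimit]
  exact (hnum.div hden (mul_ne_zero hμE hμE)).sub_const 1

/-- along any sequence converging non-tangentially to an atom `E` of `μ`,
`I_{μ̂}(ω_n) → 1/μ({E}) − 1`. -/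
theorem statement6 (μ : Measure ℝ) (hprob : IsProbabilityMeasure μ)
    (hcpt : ∃ K : Set ℝ, IsCompact K ∧ μ Kᶜ = 0)
    (hcent : ∫ x, x ∂μ = 0)
    (hnd : ∀ a : ℝ, μ ≠ Measure.dirac a)
    (μh : Measure ℝ) (hNev : IsNevanlinna μ μh)
    (E : ℝ) (hatom : 0 < μ {E})
    (ωn : ℕ → ℂ) (him : ∀ n, 0 < (ωn n).im)
    (hlim : Tendsto ωn atTop (nhds (E : ℂ)))
    (hnontang : ∃ C : ℝ, ∀ n, |(ωn n).re - E| / (ωn n).im ≤ C) :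
    Tendsto (fun n => Inu μh (ωn n)) atTop (nhds (1 / (μ {E}).toReal - 1)) :=
  statement6_general μ hprob μh hNev E hatom ωn him hlim hnontang

end
end

section
/- Let ν be a nonzero finite Borel measure on ℝ and let a < b be real numbers with (a, b) ∩ supp ν = ∅ and ∫_ℝ (x − a)⁻² dν(x) = +∞ and ∫_ℝ (x − b)⁻² dν(x) = +∞ (as integrals with values in [0, +∞]). Then there exists a unique ω₀ ∈ (a, b) with ∫_ℝ (x − ω₀)⁻³ dν(x) = 0, and ω₀ is the unique minimizer on (a, b) of the function ω ↦ ∫_ℝ (x − ω)⁻² dν(x). -/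
open MeasureTheory Complex Set Filter Topology

noncomputable section

/-! As a `[0, ∞]`-valued function of `ω ∈ ℝ`, `∫ (x - ω)⁻² dν` is lower semicontinuous by Fatou's
lemma and equals `∞` at `a` and `b`, so it attains its minimum over `[a, b]` at an interior point,
where its derivative `2 ∫ (x - ω)⁻³ dν` vanishes. Conversely, for `ν`-a.e. `x` the number `x - ω`
keeps its sign as `ω` runs through `(a, b)`, and `u ↦ u⁻²` is strictly convex on each half-line;
integrating its tangent-line inequality shows that every zero of `∫ (x - ω)⁻³ dν` in `(a, b)` is
a strict minimizer there, which gives both uniqueness statements. -/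

open scoped ENNReal

lemma measure_eq_zero_of_inter_msupport_eq_empty {μ : Measure ℝ} {s : Set ℝ}
    (hs : s ∩ msupport μ = ∅) : μ s = 0 := by
  refine measure_null_of_locally_null s fun x hx => ?_
  have hx' : x ∉ msupport μ := fun h => (eq_empty_iff_forall_notMem.mp hs) x ⟨hx, h⟩
  simp only [msupport, mem_ofPred_eq, not_forall, not_lt, nonpos_iff_eq_zero] at hx'
  obtain ⟨U, hU, hxU, hμU⟩ := hx'
  exact ⟨U, mem_nhdsWithin_of_mem_nhds (hU.mem_nhds hxU), hμU⟩

lemma exists_pos_ae_le_abs_sub {ν : Measure ℝ} {s : Set ℝ} (hs : IsOpen s)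
    (hgap : ∀ᵐ x ∂ν, x ∉ s) {ω : ℝ} (hω : ω ∈ s) : ∃ r > 0, ∀ᵐ x ∂ν, r ≤ |x - ω| := by
  obtain ⟨r, hr, hball⟩ := Metric.isOpen_iff.mp hs ω hω
  refine ⟨r, hr, hgap.mono fun x hx => ?_⟩
  by_contra! h
  exact hx (hball (by rwa [Metric.mem_ball, Real.dist_eq]))

lemma integrable_inv_sub_pow {ν : Measure ℝ} [IsFiniteMeasure ν] {ω r : ℝ} (hr : 0 < r)
    (hν : ∀ᵐ x ∂ν, r ≤ |x - ω|) (k : ℕ) : Integrable (fun x => ((x - ω) ^ k)⁻¹) ν := by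
  refine (integrable_const (r ^ k)⁻¹).mono' (by fun_prop) (hν.mono fun x hx => ?_)
  rw [Real.norm_eq_abs, abs_inv, abs_pow]
  exact inv_anti₀ (pow_pos hr k) (pow_le_pow_left₀ hr.le hx k)

lemma hasDerivAt_inv_sub_pow {x ω : ℝ} (h : x ≠ ω) (k : ℕ) :
    HasDerivAt (fun t => ((x - t) ^ k)⁻¹) (k * ((x - ω) ^ (k + 1))⁻¹) ω := by
  have hxω : x - ω ≠ 0 := sub_ne_zero.mpr h
  have hd : HasDerivAt (fun t => ((x - t) ^ k)⁻¹)
      (-(k * (x - ω) ^ (k - 1) * -1) / ((x - ω) ^ k) ^ 2) ω :=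
    (((hasDerivAt_id' ω).const_sub x).fun_pow k).inv (pow_ne_zero k hxω)
  convert hd using 1
  rcases k with _ | n
  · simp
  · rw [Nat.add_sub_cancel]
    field_simp
    ring

lemma hasDerivAt_integral_inv_sub_pow {ν : Measure ℝ} [IsFiniteMeasure ν] {ω r : ℝ}
    (hr : 0 < r) (hν : ∀ᵐ x ∂ν, r ≤ |x - ω|) (k : ℕ) :
    HasDerivAt (fun t => ∫ x, ((x - t) ^ k)⁻¹ ∂ν) (k * ∫ x, ((x - ω) ^ (k + 1))⁻¹ ∂ν) ω := by
  have hfar : ∀ᵐ x ∂ν, ∀ t ∈ Metric.ball ω (r / 2), r / 2 ≤ |x - t| := hν.mono fun x hx t ht => by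
    rw [Metric.mem_ball, Real.dist_eq] at ht
    linarith [abs_sub_le x t ω, abs_sub_comm t ω]
  rw [← integral_const_mul]
  refine (hasDerivAt_integral_of_dominated_loc_of_deriv_le (F := fun t x => ((x - t) ^ k)⁻¹)
    (F' := fun t x => k * ((x - t) ^ (k + 1))⁻¹) (bound := fun _ => k * ((r / 2) ^ (k + 1))⁻¹)
    (Metric.ball_mem_nhds ω (half_pos hr)) (Eventually.of_forall fun t => by fun_prop)
    (integrable_inv_sub_pow hr hν k) (by fun_prop) ?_ (integrable_const _) ?_).2
  · filter_upwards [hfar] with x hx t ht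
    rw [norm_mul, Real.norm_natCast, Real.norm_eq_abs, abs_inv, abs_pow]
    gcongr
    exact hx t ht
  · filter_upwards [hfar] with x hx t ht
    refine hasDerivAt_inv_sub_pow (fun h => ?_) k
    have := hx t ht
    rw [h, sub_self, abs_zero] at this
    linarith

lemma lowerSemicontinuous_lintegral {X α : Type*} [TopologicalSpace X] [FirstCountableTopology X]
    [MeasurableSpace α] {μ : Measure α} {f : X → α → ℝ≥0∞} (hf : ∀ t, AEMeasurable (f t) μ)
    (hlsc : ∀ x, LowerSemicontinuous (f · x)) : LowerSemicontinuous (fun t => ∫⁻ x, f t x ∂μ) :=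
  lowerSemicontinuous_iff_le_liminf.mpr fun t =>
    (lintegral_mono fun x => (hlsc x).le_liminf t).trans (lintegral_liminf_le' hf)

lemma lowerSemicontinuous_ofReal_inv_sub_pow (x : ℝ) (k : ℕ) :
    LowerSemicontinuous (fun ω : ℝ => ENNReal.ofReal ((x - ω) ^ k)⁻¹) := by
  intro ω
  rcases eq_or_ne x ω with rfl | hxω
  -- At `ω = x` the value is the junk `ofReal 0⁻¹ = 0` (or `1` if `k = 0`), a global minimum.
  · have hmin : ∀ t, ENNReal.ofReal ((x - x) ^ k)⁻¹ ≤ ENNReal.ofReal ((x - t) ^ k)⁻¹ := by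
      rcases k with _ | n <;> simp
    exact fun y hy => Eventually.of_forall fun t => hy.trans_le (hmin t)
  · exact (ENNReal.continuous_ofReal.continuousAt.comp
      ((continuousAt_const.sub continuousAt_id).pow k |>.inv₀
        (pow_ne_zero k (sub_ne_zero.mpr hxω)))).lowerSemicontinuousAt

lemma integral_pos_of_ae_pos {α : Type*} [MeasurableSpace α] {μ : Measure α} (hμ : μ ≠ 0)
    {f : α → ℝ} (hf : Integrable f μ) (hpos : ∀ᵐ x ∂μ, 0 < f x) : 0 < ∫ x, f x ∂μ := by
  rw [integral_pos_iff_support_of_nonneg_ae (hpos.mono fun _ h => h.le) hf]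
  have hsupp : Function.support f =ᵐ[μ] univ :=
    ae_eq_univ.mpr (measure_eq_zero_iff_ae_notMem.mpr (hpos.mono fun x hx h => h hx.ne'))
  rw [measure_congr hsupp]
  exact Measure.measure_univ_pos.mpr hμ

lemma inv_sq_tangent_line_lt {u v : ℝ} (huv : 0 < u * v) (hne : u ≠ v) :
    (u ^ 2)⁻¹ - 2 * (v - u) * (u ^ 3)⁻¹ < (v ^ 2)⁻¹ := by
  have hu : u ≠ 0 := by rintro rfl; simp at huv
  have hv : v ≠ 0 := by rintro rfl; simp at huv
  have key : (v ^ 2)⁻¹ - ((u ^ 2)⁻¹ - 2 * (v - u) * (u ^ 3)⁻¹)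
      = (u - v) ^ 2 * (u ^ 2 + 2 * (u * v)) / (u ^ 4 * v ^ 2) := by
    field_simp
    ring
  rw [← sub_pos, key]
  have := sub_ne_zero.mpr hne
  positivity

lemma sub_mul_sub_pos_of_notMem_Ioo {a b x s t : ℝ} (hx : x ∉ Ioo a b) (hs : s ∈ Ioo a b)
    (ht : t ∈ Ioo a b) : 0 < (x - s) * (x - t) := by
  rcases le_or_gt x a with hxa | hax
  · exact mul_pos_of_neg_of_neg (by linarith [hs.1]) (by linarith [ht.1])
  · have hbx : b ≤ x := not_lt.mp fun hxb => hx ⟨hax, hxb⟩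
    exact mul_pos (by linarith [hs.2]) (by linarith [ht.2])

section Gap

variable {ν : Measure ℝ} [IsFiniteMeasure ν] {a b : ℝ}

lemma exists_mem_Ioo_isMinOn_integral_inv_sub_sq (hgap : ∀ᵐ x ∂ν, x ∉ Ioo a b) (hab : a < b)
    (ha : ∫⁻ x, ENNReal.ofReal (((x - a) ^ 2)⁻¹) ∂ν = ⊤)
    (hb : ∫⁻ x, ENNReal.ofReal (((x - b) ^ 2)⁻¹) ∂ν = ⊤) :
    ∃ ω₀ ∈ Ioo a b, IsMinOn (fun ω => ∫ x, ((x - ω) ^ 2)⁻¹ ∂ν) (Ioo a b) ω₀ := by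
  set Φ : ℝ → ℝ≥0∞ := fun ω => ∫⁻ x, ENNReal.ofReal (((x - ω) ^ 2)⁻¹) ∂ν
  have hΦ_lt_top : ∀ ω ∈ Ioo a b, Φ ω < ⊤ := fun ω hω => by
    obtain ⟨r, hr, hfar⟩ := exists_pos_ae_le_abs_sub isOpen_Ioo hgap hω
    exact (integrable_inv_sub_pow hr hfar 2).lintegral_lt_top
  have hΦ_lsc : LowerSemicontinuous Φ :=
    lowerSemicontinuous_lintegral (fun _ => by fun_prop)
      fun x => lowerSemicontinuous_ofReal_inv_sub_pow x 2
  obtain ⟨ω₀, hω₀, hmin⟩ :=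
    (hΦ_lsc.lowerSemicontinuousOn _).exists_isMinOn (nonempty_Icc.mpr hab.le) isCompact_Icc
  -- `Φ` is finite in the gap, so its minimizer over `[a, b]` is not an endpoint.
  have hmid : (a + b) / 2 ∈ Ioo a b := ⟨by linarith, by linarith⟩
  have hΦω₀ : Φ ω₀ < ⊤ := (hmin (Ioo_subset_Icc_self hmid)).trans_lt (hΦ_lt_top _ hmid)
  have hω₀_mem : ω₀ ∈ Ioo a b := by
    refine ⟨hω₀.1.lt_of_ne ?_, hω₀.2.lt_of_ne ?_⟩ <;> rintro rfl
    · exact hΦω₀.ne ha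
    · exact hΦω₀.ne hb
  refine ⟨ω₀, hω₀_mem, isMinOn_iff.mpr fun ω hω => ?_⟩
  have hI : ∀ ω, ∫ x, ((x - ω) ^ 2)⁻¹ ∂ν = (Φ ω).toReal := fun ω =>
    integral_eq_lintegral_of_nonneg_ae (ae_of_all _ fun x => by positivity) (by fun_prop)
  rw [hI, hI]
  exact ENNReal.toReal_mono (hΦ_lt_top ω hω).ne (hmin (Ioo_subset_Icc_self hω))

lemma integral_inv_sub_pow_three_eq_zero_of_isMinOn {s : Set ℝ} (hs : IsOpen s)
    (hgap : ∀ᵐ x ∂ν, x ∉ s) {ω₀ : ℝ} (hω₀ : ω₀ ∈ s)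
    (hmin : IsMinOn (fun ω => ∫ x, ((x - ω) ^ 2)⁻¹ ∂ν) s ω₀) :
    ∫ x, ((x - ω₀) ^ 3)⁻¹ ∂ν = 0 := by
  obtain ⟨r, hr, hfar⟩ := exists_pos_ae_le_abs_sub hs hgap hω₀
  have h := (hmin.isLocalMin (hs.mem_nhds hω₀)).hasDerivAt_eq_zero
    (hasDerivAt_integral_inv_sub_pow hr hfar 2)
  simpa using h

lemma integral_inv_sub_sq_lt_of_integral_inv_sub_pow_three_eq_zero (hν : ν ≠ 0)
    (hgap : ∀ᵐ x ∂ν, x ∉ Ioo a b) {ω₀ ω : ℝ} (hω₀ : ω₀ ∈ Ioo a b) (hω : ω ∈ Ioo a b)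
    (hne : ω ≠ ω₀) (hcrit : ∫ x, ((x - ω₀) ^ 3)⁻¹ ∂ν = 0) :
    ∫ x, ((x - ω₀) ^ 2)⁻¹ ∂ν < ∫ x, ((x - ω) ^ 2)⁻¹ ∂ν := by
  obtain ⟨r₀, hr₀, hfar₀⟩ := exists_pos_ae_le_abs_sub isOpen_Ioo hgap hω₀
  obtain ⟨r, hr, hfar⟩ := exists_pos_ae_le_abs_sub isOpen_Ioo hgap hω
  have hsq₀ := integrable_inv_sub_pow hr₀ hfar₀ 2
  have hcube₀ := (integrable_inv_sub_pow hr₀ hfar₀ 3).const_mul (2 * (ω₀ - ω))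
  have htan_int : Integrable
      (fun x => ((x - ω₀) ^ 2)⁻¹ - 2 * (ω₀ - ω) * ((x - ω₀) ^ 3)⁻¹) ν := hsq₀.sub hcube₀
  -- Tangent-line inequality of `u ↦ u⁻²` at `u = x - ω₀`; its linear term integrates to zero.
  have htangent : 0 < ∫ x, (((x - ω) ^ 2)⁻¹ -
      (((x - ω₀) ^ 2)⁻¹ - 2 * (ω₀ - ω) * ((x - ω₀) ^ 3)⁻¹)) ∂ν := by
    refine integral_pos_of_ae_pos hν ((integrable_inv_sub_pow hr hfar 2).sub htan_int)
      (hgap.mono fun x hx => sub_pos.mpr ?_)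
    have h := inv_sq_tangent_line_lt (sub_mul_sub_pos_of_notMem_Ioo hx hω₀ hω)
      (by contrapose! hne; linarith)
    rwa [sub_sub_sub_cancel_left] at h
  rw [integral_sub (integrable_inv_sub_pow hr hfar 2) htan_int,
    integral_sub hsq₀ hcube₀, integral_const_mul, hcrit, mul_zero, sub_zero, sub_pos] at htangent
  exact htangent

end Gap

/-- on a gap `(a,b)` of `supp ν` at whose endpoints `∫ (x−·)⁻² dν` blows up,
there is a unique `ω₀ ∈ (a,b)` with `∫ (x−ω₀)⁻³ dν = 0`, and it is the unique minimizer
of `ω ↦ ∫ (x−ω)⁻² dν` on `(a,b)`. -/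
theorem statement8 (ν : Measure ℝ) (hfin : IsFiniteMeasure ν) (hν : ν ≠ 0)
    (a b : ℝ) (hab : a < b) (hdisj : Set.Ioo a b ∩ msupport ν = ∅)
    (ha : ∫⁻ x, ENNReal.ofReal (((x - a) ^ 2)⁻¹) ∂ν = ⊤)
    (hb : ∫⁻ x, ENNReal.ofReal (((x - b) ^ 2)⁻¹) ∂ν = ⊤) :
    ∃ ω0 ∈ Set.Ioo a b,
      (∫ x, ((x - ω0) ^ 3)⁻¹ ∂ν = 0) ∧
      (∀ ω ∈ Set.Ioo a b, (∫ x, ((x - ω) ^ 3)⁻¹ ∂ν = 0) → ω = ω0) ∧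
      (∀ ω ∈ Set.Ioo a b, ω ≠ ω0 →
        ∫ x, ((x - ω0) ^ 2)⁻¹ ∂ν < ∫ x, ((x - ω) ^ 2)⁻¹ ∂ν) := by
  have hgap : ∀ᵐ x ∂ν, x ∉ Ioo a b :=
    measure_eq_zero_iff_ae_notMem.mp (measure_eq_zero_of_inter_msupport_eq_empty hdisj)
  obtain ⟨ω₀, hω₀, hmin⟩ := exists_mem_Ioo_isMinOn_integral_inv_sub_sq hgap hab ha hb
  have hcrit := integral_inv_sub_pow_three_eq_zero_of_isMinOn isOpen_Ioo hgap hω₀ hmin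
  have hstrict {ω₁ ω₂ : ℝ} (hω₁ : ω₁ ∈ Ioo a b) (hω₂ : ω₂ ∈ Ioo a b) (hne : ω₂ ≠ ω₁) :=
    integral_inv_sub_sq_lt_of_integral_inv_sub_pow_three_eq_zero hν hgap hω₁ hω₂ hne
  refine ⟨ω₀, hω₀, hcrit, fun ω hω hcritω => ?_, fun ω hω hne => hstrict hω₀ hω hne hcrit⟩
  by_contra hne
  exact (hstrict hω₀ hω hne hcrit).asymm (hstrict hω hω₀ (Ne.symm hne) hcritω)

end
end
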